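/- arXiv:2507.16062 — 5 statements merged into one kernel-verified Lean document; each statement's English description precedes it below -/
import Mathlib

section
/- The adjunctions ∃_f ⊣ P(A)^f ⊣ ∀_f for the realizability tripos satisfy the Beck–Chevalley condition: for any pullback square of sets with top f : X → Y, left g : X → Z, right h : Y → W, bottom k : Z → W, one has ∀_f ∘ P(A)^g ≅ P(A)^h ∘ ∀_k (isomorphism in the pointwise realizability preorder). -/
/-- A partial combinatory algebra. -/
structure Pca where
  carrier : Type
  app : carrier → carrier → Part carrier
  k : carrier
  s : carrier
  k_spec : ∀ x y : carrier, (app k x).bind (fun u => app u y) = Part.some x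
  s_defined : ∀ a b : carrier, ((app s a).bind (fun u => app u b)).Dom
  s_spec : ∀ a b c : carrier,
    ((app a c).bind (fun u => (app b c).bind (fun v => app u v))).Dom →
      (((app s a).bind (fun u => app u b)).bind (fun w => app w c)) =
        ((app a c).bind (fun u => (app b c).bind (fun v => app u v)))

/-- The realizability preorder on `X → Set A`. -/
def rle (P : Pca) {X : Type*} (φ ψ : X → Set P.carrier) : Prop :=
  ∃ r : P.carrier, ∀ x : X, ∀ a ∈ φ x, ∃ b ∈ P.app r a, b ∈ ψ x

/-- `∀_f(φ)(y) = {a | ∀ b, ∀ x with f(x)=y, a·b is defined and a·b ∈ φ(x)}`. -/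
def rAll (P : Pca) {X Y : Type*} (f : X → Y) (φ : X → Set P.carrier) : Y → Set P.carrier :=
  fun y => {a | ∀ b : P.carrier, ∀ x : X, f x = y → ∃ c ∈ P.app a b, c ∈ φ x}

lemma Pca.exists_id (P : Pca) : ∃ i : P.carrier, ∀ a : P.carrier, P.app i a = Part.some a := by
  have hsk : ((P.app P.s P.k).bind (fun u => P.app u P.k)).Dom := P.s_defined P.k P.k
  refine ⟨((P.app P.s P.k).bind (fun u => P.app u P.k)).get hsk, fun a => ?_⟩
  have hka : (P.app P.k a).Dom := by
    have h1 : ((P.app P.k a).bind (fun u => P.app u a)).Dom := by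
      rw [P.k_spec a a]; trivial
    exact h1.fst
  have hkaeq : P.app P.k a = Part.some ((P.app P.k a).get hka) := (Part.some_get hka).symm
  set ka := (P.app P.k a).get hka with hkadef
  have hinner : P.app ka ka = Part.some a := by
    have := P.k_spec a ka
    rwa [hkaeq, Part.bind_some] at this
  have H : ((P.app P.k a).bind (fun u => (P.app P.k a).bind (fun v => P.app u v))).Dom := by
    rw [hkaeq, Part.bind_some, Part.bind_some, hinner]; trivial
  have hs := P.s_spec P.k P.k a H
  rw [hkaeq, Part.bind_some, Part.bind_some, hinner] at hs
  rw [← Part.some_get hsk, Part.bind_some] at hs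
  exact hs

/-- Beck–Chevalley for the realizability tripos: given a pullback
square of sets (top `f : X → Y`, left `g : X → Z`, right `h : Y → W`, bottom
`k : Z → W`), `∀_f ∘ P(A)^g ≅ P(A)^h ∘ ∀_k` in the pointwise realizability preorder. -/
theorem stmt_4 (P : Pca) {X Y Z W : Type*}
    (f : X → Y) (g : X → Z) (h : Y → W) (k : Z → W)
    (hcomm : ∀ x : X, h (f x) = k (g x))
    (hpb : ∀ (y : Y) (z : Z), h y = k z → ∃! x : X, f x = y ∧ g x = z)
    (φ : Z → Set P.carrier) :
    rle P (rAll P f (fun x => φ (g x))) (fun y => rAll P k φ (h y)) ∧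
    rle P (fun y => rAll P k φ (h y)) (rAll P f (fun x => φ (g x))) := by
  obtain ⟨i, hi⟩ := P.exists_id
  constructor
  · refine ⟨i, fun y a ha => ⟨a, by rw [hi]; exact Part.mem_some a, ?_⟩⟩
    intro b z hz
    obtain ⟨x, ⟨hfx, hgx⟩, -⟩ := hpb y z hz.symm
    obtain ⟨c, hc, hcφ⟩ := ha b x hfx
    exact ⟨c, hc, by simpa [hgx] using hcφ⟩
  · refine ⟨i, fun y a ha => ⟨a, by rw [hi]; exact Part.mem_some a, ?_⟩⟩
    intro b x hfx
    exact ha b (g x) (by rw [← hcomm x, hfx])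
end

section
/- If a functor F : A → B between groupoids is both a normal isofibration and an equivalence of groupoids, then F is a strong deformation retract: there exists a section s of F and a natural isomorphism α : s ∘ F ≅ id_A such that F ⋅ α is the identity natural transformation on F. -/
open CategoryTheory

/-- `F` is an equivalence of groupoids. -/
def GrpdEquiv {A B : Type*} [Category A] [Category B] (F : A ⥤ B) : Prop :=
  ∃ G : B ⥤ A, Nonempty (F ⋙ G ≅ 𝟭 A) ∧ Nonempty (G ⋙ F ≅ 𝟭 B)

/-- `F` is a normal isofibration: there is a chosen lifting of every morphism
`p : F(a) → b` to a morphism out of `a` lying over `p`, with identities lifting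
to identities. -/
def IsNormalIsofib {A B : Type*} [Category A] [Category B] (F : A ⥤ B) : Prop :=
  ∃ L : ∀ ⦃a : A⦄ ⦃b : B⦄, (F.obj a ⟶ b) → Σ' a' : A, a ⟶ a',
    (∀ ⦃a : A⦄ ⦃b : B⦄ (p : F.obj a ⟶ b),
        ∃ h : F.obj (L p).1 = b, F.map (L p).2 ≫ eqToHom h = p) ∧
    (∀ a : A, L (𝟙 (F.obj a)) = ⟨a, 𝟙 a⟩)

/-- `F` is a strong deformation retract: it has a section `s` (`s ⋙ F = 𝟭`) and a
natural isomorphism `α : F ⋙ s ≅ 𝟭` with `F ⋅ α` the identity. -/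
def IsSDR {A B : Type*} [Category A] [Category B] (F : A ⥤ B) : Prop :=
  ∃ (s : B ⥤ A) (hs : s ⋙ F = 𝟭 B) (α : F ⋙ s ≅ 𝟭 A),
    ∀ a : A, F.map (α.hom.app a) = eqToHom (Functor.congr_obj hs (F.obj a))

/-- a functor of groupoids that is both a normal isofibration and a
groupoid equivalence is a strong deformation retract. -/
theorem stmt_14 {A B : Type*} [Groupoid A] [Groupoid B] (F : A ⥤ B)
    (hfib : IsNormalIsofib F) (heq : GrpdEquiv F) : IsSDR F := by
  obtain ⟨L, hL, -⟩ := hfib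
  obtain ⟨G, ⟨η⟩, ⟨ε⟩⟩ := heq
  haveI : F.IsEquivalence := (CategoryTheory.Equivalence.mk F G η.symm ε).isEquivalence_functor
  choose hob hmap using hL
  -- section on objects
  set sobj : B → A := fun b => (L (ε.hom.app b)).1 with hsobj
  have hFb : ∀ b : B, F.obj (sobj b) = b := fun b => hob (ε.hom.app b)
  let s : B ⥤ A :=
    { obj := sobj
      map := fun {b b'} q => F.preimage (eqToHom (hFb b) ≫ q ≫ eqToHom (hFb b').symm)
      map_id := by
        intro b
        apply F.map_injective
        simp
      map_comp := by
        intro b b' b'' q q'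
        apply F.map_injective
        simp }
  have hs : s ⋙ F = 𝟭 B := by
    refine CategoryTheory.Functor.ext (fun b => hFb b) ?_
    intro b b' q
    simp [s]
  refine ⟨s, hs, NatIso.ofComponents
    (fun a => asIso (F.preimage (eqToHom (hFb (F.obj a)) : F.obj (s.obj (F.obj a)) ⟶ F.obj a)))
    ?_, ?_⟩
  · intro a a' f
    apply F.map_injective
    simp [s]
  · intro a
    simp
end

section
/- If a functor j : A → B between groupoids is injective on objects and an equivalence of groupoids, then j is a strong deformation section: there exist a retraction r : B → A with r ∘ j = id_A and a natural isomorphism β : j ∘ r ≅ id_B such that β_{j(a)} = id_{j(a)} for every object a of A. -/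
open CategoryTheory

/-- `i` is a strong deformation section: it has a retraction `r` (`i ⋙ r = 𝟭`)
and a natural isomorphism `β : r ⋙ i ≅ 𝟭` whose components at objects in the
image of `i` are identities. -/
def IsSDS {A B : Type*} [Category A] [Category B] (i : A ⥤ B) : Prop :=
  ∃ (r : B ⥤ A) (hr : i ⋙ r = 𝟭 A) (β : r ⋙ i ≅ 𝟭 B),
    ∀ a : A, β.hom.app (i.obj a) = eqToHom (congrArg i.obj (Functor.congr_obj hr a))

/-- a functor of groupoids that is injective on objects and a
groupoid equivalence is a strong deformation section. -/
theorem stmt_15 {A B : Type*} [Groupoid A] [Groupoid B] (j : A ⥤ B)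
    (hinj : Function.Injective j.obj) (heq : GrpdEquiv j) : IsSDS j := by
  classical
  obtain ⟨G, ⟨η⟩, ⟨ε⟩⟩ := heq
  have ff : j.FullyFaithful := (CategoryTheory.Equivalence.mk j G η.symm ε).fullyFaithfulFunctor
  set θ : B → A := fun b => if h : ∃ a, j.obj a = b then h.choose else G.obj b with hθ
  have hθ1 : ∀ b (h : ∃ a, j.obj a = b), θ b = h.choose := fun b h => dif_pos h
  have hθj : ∀ b (h : ∃ a, j.obj a = b), j.obj (θ b) = b := by
    intro b h
    rw [hθ1 b h]; exact h.choose_spec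
  have hθ2 : ∀ b (h : ¬ ∃ a, j.obj a = b), θ b = G.obj b := fun b h => dif_neg h
  let ι : ∀ b, j.obj (θ b) ≅ b := fun b =>
    if h : ∃ a, j.obj a = b then eqToIso (hθj b h)
    else eqToIso (congrArg j.obj (hθ2 b h)) ≪≫ ε.app b
  have hι : ∀ b (h : ∃ a, j.obj a = b), ι b = eqToIso (hθj b h) := fun b h => dif_pos h
  let r : B ⥤ A :=
    { obj := θ
      map := fun {b b'} f => ff.preimage ((ι b).hom ≫ f ≫ (ι b').inv)
      map_id := by intro b; apply ff.map_injective; simp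
      map_comp := by intro b b' b'' f g; apply ff.map_injective; simp }
  have hθa : ∀ a : A, θ (j.obj a) = a := by
    intro a
    exact hinj ((hθj (j.obj a) ⟨a, rfl⟩))
  have hr : j ⋙ r = 𝟭 A := by
    refine CategoryTheory.Functor.ext hθa ?_
    intro a a' f
    apply ff.map_injective
    have h1 : ∃ x, j.obj x = j.obj a := ⟨a, rfl⟩
    have h2 : ∃ x, j.obj x = j.obj a' := ⟨a', rfl⟩
    show j.map (ff.preimage ((ι (j.obj a)).hom ≫ j.map f ≫ (ι (j.obj a')).inv)) = _
    rw [ff.map_preimage, hι _ h1, hι _ h2]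
    simp [eqToHom_map]
  refine ⟨r, hr, NatIso.ofComponents ι ?_, ?_⟩
  · intro b b' f
    show j.map (ff.preimage ((ι b).hom ≫ f ≫ (ι b').inv)) ≫ (ι b').hom = (ι b).hom ≫ f
    rw [ff.map_preimage]
    simp
  · intro a
    show (ι (j.obj a)).hom = _
    rw [hι _ ⟨a, rfl⟩]
    rfl
end

section
/- For groupoids, a functor f : X → Y has the right lifting property against all strong deformation sections if and only if f is a normal isofibration; dually, a functor i : U → V has the left lifting property against all normal isofibrations if and only if i is a strong deformation section. -/
/-!
A strong deformation section `i` (retraction `r`, deformation `β : r ⋙ i ≅ 𝟭`) lifts against a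
normal isofibration `f`: the square and `β` give a natural isomorphism `(r ⋙ t) ⋙ f ≅ b`, which
lifts objectwise through `f` to a functor `d` over `b`. Since `β` is the identity on the image of
`i` and identities lift to identities, `d` restricts to `t` along `i`.

For the converses, factor a functor `F : A ⥤ B` through its mapping-path groupoid `Comma F (𝟭 B)`:
the inclusion `a ↦ (a, F a, 𝟙)` is a strong deformation section and the projection `Comma.snd` is a
normal isofibration. A lift in the square formed by this factorization exhibits `f` as a retract of
its projection (resp. `i` as a retract of its inclusion), and both classes are closed under retracts.
-/

open CategoryTheory

universe u

theorem IsNormalIsofib.of_exists_lift {A B : Type*} [Category A] [Category B] {F : A ⥤ B}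
    (H : ∀ ⦃a : A⦄ ⦃b : B⦄ (p : F.obj a ⟶ b),
      ∃ (a' : A) (φ : a ⟶ a') (e : F.obj a' = b), F.map φ ≫ eqToHom e = p) :
    IsNormalIsofib F := by
  classical
  -- lifts of `eqToHom`s are taken to be identities, which makes the choice normal
  refine ⟨fun a b p => if ∃ e : F.obj a = b, p = eqToHom e then ⟨a, 𝟙 a⟩
    else ⟨(H p).choose, (H p).choose_spec.choose⟩, fun a b p => ?_, fun a => if_pos ⟨rfl, rfl⟩⟩
  beta_reduce
  by_cases h : ∃ e : F.obj a = b, p = eqToHom e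
  · rw [if_pos h]
    obtain ⟨e, rfl⟩ := h
    exact ⟨e, by simp⟩
  · rw [if_neg h]
    exact (H p).choose_spec.choose_spec

structure NormalCleavage {A B : Type*} [Category A] [Category B] (F : A ⥤ B) where
  lift ⦃a : A⦄ ⦃b : B⦄ (p : F.obj a ⟶ b) : Σ' a' : A, a ⟶ a'
  obj_lift ⦃a : A⦄ ⦃b : B⦄ (p : F.obj a ⟶ b) : F.obj (lift p).1 = b
  map_lift ⦃a : A⦄ ⦃b : B⦄ (p : F.obj a ⟶ b) : F.map (lift p).2 ≫ eqToHom (obj_lift p) = p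
  lift_id (a : A) : lift (𝟙 (F.obj a)) = ⟨a, 𝟙 a⟩

noncomputable def IsNormalIsofib.cleavage {A B : Type*} [Category A] [Category B] {F : A ⥤ B}
    (hF : IsNormalIsofib F) : NormalCleavage F where
  lift := hF.choose
  obj_lift _ _ p := (hF.choose_spec.1 p).choose
  map_lift _ _ p := (hF.choose_spec.1 p).choose_spec
  lift_id := hF.choose_spec.2

namespace NormalCleavage

section

variable {A B : Type*} [Category A] [Category B] {F : A ⥤ B} (c : NormalCleavage F)

theorem lift_eqToHom {a : A} {b : B} (h : F.obj a = b) : c.lift (eqToHom h) = ⟨a, 𝟙 a⟩ := by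
  subst h
  exact c.lift_id a

theorem lift_snd_eq_eqToHom {a : A} {b : B} {p : F.obj a ⟶ b} (hp : c.lift p = ⟨a, 𝟙 a⟩) :
    (c.lift p).2 = eqToHom (congrArg PSigma.fst hp).symm := by
  revert hp
  generalize c.lift p = s
  rintro rfl
  rfl

end

variable {V X Y : Type*} [Category V] [Groupoid X] [Category Y] {f : X ⥤ Y}
  (c : NormalCleavage f) {g : V ⥤ X} {b : V ⥤ Y} (θ : g ⋙ f ≅ b)

noncomputable def liftFunctor : V ⥤ X :=
  g.copyObj (fun v => (c.lift (θ.hom.app v)).1)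
    (fun v => asIso (c.lift (θ.hom.app v)).2)

noncomputable def liftIso : g ≅ c.liftFunctor θ :=
  g.isoCopyObj _ _

@[simp]
theorem liftIso_hom_app (v : V) : (c.liftIso θ).hom.app v = (c.lift (θ.hom.app v)).2 :=
  rfl

theorem liftFunctor_comp : c.liftFunctor θ ⋙ f = b :=
  Functor.ext_of_iso (Functor.isoWhiskerRight (c.liftIso θ).symm f ≪≫ θ) (fun v => c.obj_lift _)
    fun v => by
      rw [← cancel_epi (f.map ((c.liftIso θ).hom.app v)), Iso.trans_hom, NatTrans.comp_app, Functor.isoWhiskerRight_hom,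
        Functor.whiskerRight_app, Iso.symm_hom, ← f.map_comp_assoc, Iso.hom_inv_id_app,
        f.map_id, Category.id_comp, liftIso_hom_app]
      exact (c.map_lift _).symm

theorem comp_liftFunctor {W : Type*} [Category W] (j : W ⥤ V) (h : j ⋙ g ⋙ f = j ⋙ b)
    (hθ : Functor.whiskerLeft j θ.hom = eqToHom h) : j ⋙ c.liftFunctor θ = j ⋙ g := by
  have hlift (w : W) : c.lift (θ.hom.app (j.obj w)) = ⟨g.obj (j.obj w), 𝟙 _⟩ := by
    rw [show θ.hom.app (j.obj w) = eqToHom (Functor.congr_obj h w) by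
      simpa using NatTrans.congr_app hθ w]
    exact c.lift_eqToHom _
  exact (Functor.ext_of_iso (Functor.isoWhiskerLeft j (c.liftIso θ))
    (fun w => (congrArg PSigma.fst (hlift w)).symm) (fun w => c.lift_snd_eq_eqToHom (hlift w))).symm

end NormalCleavage

theorem IsSDS.exists_lift {U V X Y : Type*} [Category U] [Category V] [Groupoid X] [Category Y]
    {i : U ⥤ V} {f : X ⥤ Y} (hi : IsSDS i) (hf : IsNormalIsofib f) {t : U ⥤ X} {b : V ⥤ Y}
    (hsq : t ⋙ f = i ⋙ b) : ∃ d : V ⥤ X, i ⋙ d = t ∧ d ⋙ f = b := by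
  obtain ⟨r, hr, β, hβ⟩ := hi
  let θ : (r ⋙ t) ⋙ f ≅ b := Functor.isoWhiskerLeft r (eqToIso hsq) ≪≫ Functor.isoWhiskerRight β b
  refine ⟨hf.cleavage.liftFunctor θ, ?_, hf.cleavage.liftFunctor_comp θ⟩
  have h : i ⋙ (r ⋙ t) ⋙ f = i ⋙ b := by
    rw [← hsq, ← Functor.assoc, ← Functor.assoc, hr]
    rfl
  have hθ : Functor.whiskerLeft i θ.hom = eqToHom h := by
    ext a
    simp [θ, hβ, eqToHom_map]
  rw [hf.cleavage.comp_liftFunctor θ i h hθ, ← Functor.assoc, hr, Functor.id_comp]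

theorem IsNormalIsofib.of_retract {A A' B : Type*} [Category A] [Category A'] [Category B]
    {f : A ⥤ B} {g : A' ⥤ B} (hg : IsNormalIsofib g) (s : A ⥤ A') (d : A' ⥤ A)
    (hsd : s ⋙ d = 𝟭 A) (hs : s ⋙ g = f) (hd : d ⋙ f = g) : IsNormalIsofib f := by
  refine .of_exists_lift fun a b p => ?_
  let c := hg.cleavage
  let q : g.obj (s.obj a) ⟶ b := eqToHom (Functor.congr_obj hs a) ≫ p
  refine ⟨d.obj (c.lift q).1, eqToHom (Functor.congr_obj hsd a).symm ≫ d.map (c.lift q).2,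
    (Functor.congr_obj hd _).trans (c.obj_lift q), ?_⟩
  have hdσ := Functor.congr_hom hd (c.lift q).2
  simp only [Functor.comp_map] at hdσ
  have hσ := (comp_eqToHom_iff _ _ _).1 (c.map_lift q)
  rw [Functor.map_comp, eqToHom_map, hdσ, hσ]
  simp [q]

theorem IsSDS.of_retract {U V V' : Type*} [Category U] [Category V] [Category V']
    {i : U ⥤ V} {j : U ⥤ V'} (hj : IsSDS j) (d : V ⥤ V') (e : V' ⥤ V)
    (hd : i ⋙ d = j) (hde : d ⋙ e = 𝟭 V) (he : j ⋙ e = i) : IsSDS i := by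
  obtain ⟨r, hr, β, hβ⟩ := hj
  have hr' : i ⋙ d ⋙ r = 𝟭 U := by rw [← Functor.assoc, hd, hr]
  have hri : (d ⋙ r) ⋙ i = d ⋙ (r ⋙ j) ⋙ e := by rw [← he]; rfl
  refine ⟨d ⋙ r, hr', eqToIso hri ≪≫ Functor.isoWhiskerLeft d (Functor.isoWhiskerRight β e) ≪≫
    eqToIso hde, fun a => ?_⟩
  have hβa := NatTrans.congr β.hom (show d.obj (i.obj a) = j.obj a from Functor.congr_obj hd a)
  rw [hβ] at hβa
  simp [hβa, eqToHom_map]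

noncomputable instance {A B T : Type*} [Groupoid A] [Groupoid B] [Category T]
    (L : A ⥤ T) (R : B ⥤ T) : Groupoid (Comma L R) :=
  Groupoid.ofIsIso fun {X Y} (φ : CommaMorphism X Y) =>
    (Comma.isoMk (asIso φ.left) (asIso φ.right) φ.w).isIso_hom

section

variable {A B : Type*} [Category A] [Category B]

-- reducible, so that `((pathIncl F).obj a).left` is `a` up to reducible defeq
abbrev pathIncl (F : A ⥤ B) : A ⥤ Comma F (𝟭 B) where
  obj a := ⟨a, F.obj a, 𝟙 _⟩
  map φ := ⟨φ, F.map φ, by simp⟩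

theorem pathIncl_comp_snd (F : A ⥤ B) : pathIncl F ⋙ Comma.snd F (𝟭 B) = F :=
  rfl

theorem isNormalIsofib_snd (F : A ⥤ B) : IsNormalIsofib (Comma.snd F (𝟭 B)) :=
  .of_exists_lift fun c b q => ⟨⟨c.left, b, c.hom ≫ q⟩, ⟨𝟙 _, q, by simp⟩, rfl, by simp⟩

end

theorem isSDS_pathIncl {A B : Type*} [Category A] [Groupoid B] (F : A ⥤ B) : IsSDS (pathIncl F) := by
  refine ⟨Comma.fst F (𝟭 B), rfl,
    NatIso.ofComponents (fun c => Comma.isoMk (Iso.refl _) (asIso c.hom)) ?_, fun a => ?_⟩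
  · intro c c' φ
    ext <;> simp
  · ext <;> simp [Comma.fst]

/-- a functor of groupoids has the right lifting property against
all strong deformation sections iff it is a normal isofibration; dually, a
functor has the left lifting property against all normal isofibrations iff it is
a strong deformation section. -/
theorem stmt_16 :
    (∀ (X Y : Type u) [Groupoid.{u} X] [Groupoid.{u} Y] (f : X ⥤ Y),
       (∀ (U V : Type u) [Groupoid.{u} U] [Groupoid.{u} V] (i : U ⥤ V), IsSDS i →
          ∀ (t : U ⥤ X) (b : V ⥤ Y), t ⋙ f = i ⋙ b →
            ∃ d : V ⥤ X, i ⋙ d = t ∧ d ⋙ f = b) ↔ IsNormalIsofib f) ∧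
    (∀ (U V : Type u) [Groupoid.{u} U] [Groupoid.{u} V] (i : U ⥤ V),
       (∀ (X Y : Type u) [Groupoid.{u} X] [Groupoid.{u} Y] (f : X ⥤ Y), IsNormalIsofib f →
          ∀ (t : U ⥤ X) (b : V ⥤ Y), t ⋙ f = i ⋙ b →
            ∃ d : V ⥤ X, i ⋙ d = t ∧ d ⋙ f = b) ↔ IsSDS i) := by
  refine ⟨fun X Y _ _ f => ⟨fun H => ?_, fun hf U V _ _ i hi t b hsq => hi.exists_lift hf hsq⟩,
    fun U V _ _ i => ⟨fun H => ?_, fun hi X Y _ _ f hf t b hsq => hi.exists_lift hf hsq⟩⟩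
  · obtain ⟨d, hd, hdf⟩ :=
      H X (Comma f (𝟭 Y)) (pathIncl f) (isSDS_pathIncl f) (𝟭 X) (Comma.snd _ _) rfl
    exact (isNormalIsofib_snd f).of_retract (pathIncl f) d hd (pathIncl_comp_snd f) hdf
  · obtain ⟨d, hd, hdi⟩ :=
      H (Comma i (𝟭 V)) V (Comma.snd _ _) (isNormalIsofib_snd i) (pathIncl i) (𝟭 V) rfl
    exact (isSDS_pathIncl i).of_retract d (Comma.snd _ _) hd hdi (pathIncl_comp_snd i)
end

section
/- The pullback of a strong deformation section along a normal isofibration of groupoids is again a strong deformation section. -/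
open CategoryTheory

universe u

/-- the pullback of a strong deformation section `j : W ⥤ Y` along
a normal isofibration `F : X ⥤ Y` (a strict pullback square of groupoids with
projections `pX`, `pW` satisfying the universal property) is again a strong
deformation section. -/
theorem stmt_18 {X Y W Z : Type u}
    [Groupoid.{u} X] [Groupoid.{u} Y] [Groupoid.{u} W] [Groupoid.{u} Z]
    (F : X ⥤ Y) (j : W ⥤ Y) (pX : Z ⥤ X) (pW : Z ⥤ W)
    (hcomm : pX ⋙ F = pW ⋙ j)
    (huniv : ∀ (T : Type u) [Groupoid.{u} T] (u : T ⥤ X) (v : T ⥤ W),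
        u ⋙ F = v ⋙ j → ∃! t : T ⥤ Z, t ⋙ pX = u ∧ t ⋙ pW = v)
    (hF : IsNormalIsofib F) (hj : IsSDS j) : IsSDS pX := by
  obtain ⟨L, hL, hLid⟩ := hF
  obtain ⟨r, hr, β, hβ⟩ := hj
  -- lifts of eqToHoms are identities
  have lifteq : ∀ ⦃a : X⦄ ⦃b : Y⦄ (p : F.obj a ⟶ b) (h : F.obj a = b), p = eqToHom h →
      L p = ⟨a, 𝟙 a⟩ := by
    intro a b p h hp
    subst h
    rw [eqToHom_refl] at hp
    rw [hp]
    exact hLid a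
  -- the deformation functor G on X
  set G : X ⥤ X := {
    obj := fun x => (L (β.inv.app (F.obj x))).1
    map := fun {x y} f =>
      Groupoid.inv (L (β.inv.app (F.obj x))).2 ≫ f ≫ (L (β.inv.app (F.obj y))).2
    map_id := by intro x; simp
    map_comp := by intro x y z f g; simp } with hGdef
  have hG : ∀ x : X, F.obj (G.obj x) = j.obj (r.obj (F.obj x)) :=
    fun x => (hL (β.inv.app (F.obj x))).choose
  have hGφ : ∀ x : X,
      F.map (L (β.inv.app (F.obj x))).2 ≫ eqToHom (hG x) = β.inv.app (F.obj x) :=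
    fun x => (hL (β.inv.app (F.obj x))).choose_spec
  have hφ : ∀ x : X, F.map (L (β.inv.app (F.obj x))).2
      = β.inv.app (F.obj x) ≫ eqToHom (hG x).symm :=
    fun x => (comp_eqToHom_iff (hG x) _ _).mp (hGφ x)
  have hφinv : ∀ x : X, F.map (Groupoid.inv (L (β.inv.app (F.obj x))).2)
      = eqToHom (hG x) ≫ β.hom.app (F.obj x) := by
    intro x
    rw [← cancel_mono (F.map (L (β.inv.app (F.obj x))).2)]
    rw [← F.map_comp, Groupoid.inv_comp, F.map_id, hφ x]
    simp
  -- G ⋙ F = (F ⋙ r) ⋙ j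
  have hGF : G ⋙ F = (F ⋙ r) ⋙ j := by
    refine CategoryTheory.Functor.ext hG ?_
    intro x y f
    have nat : β.hom.app (F.obj x) ≫ F.map f
        = j.map (r.map (F.map f)) ≫ β.hom.app (F.obj y) := by
      simpa using (β.hom.naturality (F.map f)).symm
    show F.map (Groupoid.inv (L (β.inv.app (F.obj x))).2 ≫ f ≫ (L (β.inv.app (F.obj y))).2)
        = _
    rw [F.map_comp, F.map_comp, hφ y, hφinv x]
    simp only [Category.assoc]
    rw [reassoc_of% nat]
    simp
  -- the induced section s : X ⥤ Z
  obtain ⟨s, ⟨hs1, hs2⟩, -⟩ := huniv X G (F ⋙ r) hGF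
  -- β.inv at objects in the image of j is an eqToHom
  have hinv : ∀ w : W, β.inv.app (j.obj w)
      = eqToHom (congrArg j.obj (Functor.congr_obj hr w)).symm := by
    intro w
    have h1 := β.hom_inv_id_app (j.obj w)
    rw [hβ w] at h1
    rw [eqToHom_comp_iff] at h1
    simpa using h1
  -- components of β.inv at equal objects
  have happ : ∀ (y y' : Y) (hy : y = y'), β.inv.app y
      = eqToHom hy ≫ β.inv.app y' ≫ eqToHom (show j.obj (r.obj y') = j.obj (r.obj y) by
          rw [hy]) := by
    intro y y' hy
    subst hy
    simp
  -- second components of trivial lifts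
  have psig : ∀ {a : X} (p : Σ' a' : X, a ⟶ a') (h : p = ⟨a, 𝟙 a⟩),
      p.2 = eqToHom (congrArg PSigma.fst h).symm := by
    intro a p h
    subst h
    simp
  have hrw : ∀ w : W, r.obj (j.obj w) = w := fun w => Functor.congr_obj hr w
  -- the lift at objects in the image of pX is the identity
  have hfix : ∀ z : Z, L (β.inv.app (F.obj (pX.obj z))) = ⟨pX.obj z, 𝟙 (pX.obj z)⟩ := by
    intro z
    have hq : F.obj (pX.obj z) = j.obj (pW.obj z) := Functor.congr_obj hcomm z
    refine lifteq _ ?_ ?_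
    · show F.obj (pX.obj z) = j.obj (r.obj (F.obj (pX.obj z)))
      conv_rhs => rw [hq, hrw (pW.obj z)]
      exact hq
    · rw [happ _ _ hq, hinv (pW.obj z)]
      simp
  -- pX ⋙ G = pX
  have GpX : pX ⋙ G = pX := by
    refine CategoryTheory.Functor.ext (fun z => congrArg PSigma.fst (hfix z)) ?_
    intro z₁ z₂ f
    show Groupoid.inv (L (β.inv.app (F.obj (pX.obj z₁)))).2 ≫ pX.map f
        ≫ (L (β.inv.app (F.obj (pX.obj z₂)))).2 = _
    rw [psig _ (hfix z₁), psig _ (hfix z₂)]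
    simp
  -- pX ⋙ s = 𝟭 Z
  obtain ⟨t, -, ht⟩ := huniv Z pX pW hcomm
  have pXs : pX ⋙ s = 𝟭 Z := by
    have h1 : pX ⋙ s = t := by
      refine ht _ ⟨?_, ?_⟩
      · show pX ⋙ (s ⋙ pX) = pX
        rw [hs1]; exact GpX
      · show pX ⋙ (s ⋙ pW) = pW
        rw [hs2]
        show (pX ⋙ F) ⋙ r = pW
        rw [hcomm]
        show pW ⋙ (j ⋙ r) = pW
        rw [hr]
        exact Functor.comp_id pW
    have h2 : 𝟭 Z = t := ht _ ⟨Functor.id_comp pX, Functor.id_comp pW⟩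
    rw [h1, h2]
  -- conclude
  refine ⟨s, pXs, eqToIso hs1 ≪≫ NatIso.ofComponents
    (fun x => ⟨Groupoid.inv (L (β.inv.app (F.obj x))).2, (L (β.inv.app (F.obj x))).2,
      by simp, by simp⟩)
    (by
      intro x y f
      show (Groupoid.inv (L (β.inv.app (F.obj x))).2 ≫ f ≫ (L (β.inv.app (F.obj y))).2)
          ≫ Groupoid.inv (L (β.inv.app (F.obj y))).2 = _
      simp), ?_⟩
  intro z
  simp only [Iso.trans_hom, NatTrans.comp_app, eqToIso.hom, eqToHom_app,
    NatIso.ofComponents_hom_app]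
  rw [psig _ (hfix z)]
  simp
end
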